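/- Let A: ℕ×ℕ → ℂ satisfy the GL(3) Hecke relations at an unramified prime p (multiplicativity and A(n,1)A(m1,m2) = Σ_{d0d1d2=n, d1|m1, d2|m2} A(m1d0/d1, m2d1/d2)). Then for p ∤ bc: A(b^2, p^2c^2) + A(pb^2, c^2) = A(b^2,c^2)A(1,p)^2 − [p|c]A(b^2,(c/p)^2)A(p,p)A(1,p), where A(p,p) = A(p,1)A(1,p) − 1. -/
import Mathlib


open Finset

/-- let `A` satisfy the GL(3) Hecke relations at an unramified prime `p`
(multiplicativity, `A(1,1)=1`, and
`A(n,1)A(m1,m2) = Σ_{d0d1d2=n, d1∣m1, d2∣m2} A(m1d0/d1, m2d1/d2)`).  Then for `p ∤ bc`: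
`A(b², p²c²) + A(pb², c²) = A(b²,c²)A(1,p)² − [p∣c] A(b²,(c/p)²) A(p,p) A(1,p)`,
where `A(p,p) = A(p,1)A(1,p) − 1`. -/
theorem hecke_T1_squared_identity (A : ℕ → ℕ → ℂ) (hA11 : A 1 1 = 1)
    (hmult : ∀ m1 n1 m2 n2 : ℕ, Nat.Coprime (m1 * n1) (m2 * n2) →
      A (m1 * m2) (n1 * n2) = A m1 n1 * A m2 n2)
    (hhecke : ∀ n m1 m2 : ℕ, 0 < n → 0 < m1 → 0 < m2 →
      A n 1 * A m1 m2 =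
        ∑ d1 ∈ n.divisors, ∑ d2 ∈ (n / d1).divisors,
          if d1 ∣ m1 ∧ d2 ∣ m2 then
            A (m1 / d1 * (n / (d1 * d2))) (m2 / d2 * d1) else 0)
    (p : ℕ) (hp : p.Prime)
    (b c : ℕ) (hb : 0 < b) (hc : 0 < c) (hbc : ¬ p ∣ b * c) :
    A (b ^ 2) (p ^ 2 * c ^ 2) + A (p * b ^ 2) (c ^ 2) =
      A (b ^ 2) (c ^ 2) * (A 1 p) ^ 2 -
        (if p ∣ c then
          A (b ^ 2) ((c / p) ^ 2) * (A p 1 * A 1 p - 1) * A 1 p else 0) := by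
  have hp0 : 0 < p := hp.pos
  have hp1 : p ≠ 1 := hp.ne_one
  have hnp : (1:ℕ) ≠ p := fun h => hp1 h.symm
  have hpc : ¬ p ∣ c := fun h => hbc (h.mul_left b)
  have hpp1 : p ^ 2 ≠ 1 := fun h => hp1 (by nlinarith [hp.one_lt, Nat.one_le_iff_ne_zero.mpr hp.pos.ne.symm] : p = 1)
  have hp2p : p ^ 2 / p = p := by rw [pow_two, Nat.mul_div_cancel_left _ hp0]
  have hpdvd2 : ¬ p ^ 2 ∣ p := fun h =>
    absurd (Nat.le_of_dvd hp0 h) (by nlinarith [hp.one_lt])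
  -- Hecke relation instances at prime powers
  have E1 := hhecke p 1 p hp0 one_pos hp0
  have E2 := hhecke p p 1 hp0 hp0 one_pos
  have E3 := hhecke p p p hp0 hp0 hp0
  simp only [hp.divisors, Finset.sum_pair hnp, Nat.div_self hp0, Nat.div_one,
    Nat.divisors_one, Finset.sum_singleton, Nat.dvd_one, hp1, one_mul, mul_one,
    Nat.one_dvd, and_true, true_and, dvd_refl, if_true, and_false, if_false, hA11,
    add_zero] at E1 E2 E3
  have E4 := hhecke (p ^ 2) 1 p (pow_pos hp0 2) one_pos hp0
  rw [Nat.sum_divisors_prime_pow hp] at E4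
  simp only [Finset.sum_range_succ, Finset.sum_range_zero, pow_zero, pow_one, zero_add,
    Nat.div_one, one_mul] at E4
  rw [Nat.sum_divisors_prime_pow hp] at E4
  simp only [Finset.sum_range_succ, Finset.sum_range_zero, pow_zero, pow_one, zero_add,
    Nat.div_one, one_mul, mul_one, Nat.dvd_one, hp1, hpp1, Nat.one_dvd, and_true, true_and,
    and_false, false_and, if_false, if_true, dvd_refl, hp2p, Nat.div_self hp0,
    Nat.div_self (pow_pos hp0 2), hpdvd2, hA11, Finset.sum_const_zero, add_zero] at E4
  rw [← pow_two p] at E2 E3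
  -- multiplicativity
  have hcop : Nat.Coprime p (b * c) := (hp.coprime_iff_not_dvd).mpr hbc
  have M1 : A (b ^ 2) (p ^ 2 * c ^ 2) = A (b ^ 2) (c ^ 2) * A 1 (p ^ 2) := by
    have h := hmult (b ^ 2) (c ^ 2) 1 (p ^ 2) (by
      rw [← mul_pow, one_mul]
      exact (Nat.Coprime.pow 2 2 hcop.symm))
    rw [mul_one, mul_comm (c ^ 2)] at h
    exact h
  have M2 : A (p * b ^ 2) (c ^ 2) = A (b ^ 2) (c ^ 2) * A p 1 := by
    have h := hmult (b ^ 2) (c ^ 2) p 1 (by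
      rw [← mul_pow, mul_one]
      exact Nat.Coprime.pow_left 2 hcop.symm)
    rw [mul_one, mul_comm (b ^ 2)] at h
    exact h
  rw [if_neg hpc, M1, M2]
  linear_combination A (b ^ 2) (c ^ 2) *
    (E4 - E3 + A 1 p * E2 - A p 1 * E1)
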